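/- A self-complementary score sequence (s_1, ..., s_n) of length n is not strong if and only if there exists an integer i with 1 ≤ i ≤ ⌊n/2⌋ such that (s_1, ..., s_i) is a strong score sequence of length i, (s_{i+1}-i, ..., s_{n-i}-i) is a self-complementary score sequence of length n-2i, and s_{n+1-j} = n-1-s_j for 1 ≤ j ≤ i; moreover, such an index i is unique. (Here the empty sequence of length 0 and every sequence of length 1 count as self-complementary score sequences.) -/

import Mathlib

/-!
Write `S r` for the sum of the first `r` scores. A score sequence fails to be strong exactly when
`S r = C(r,2)` for some `1 ≤ r < n`. For a self-complementary sequence the excess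
`S r - C(r,2)` is invariant under `r ↦ n - r`, so the least such `r`, call it `i`, is at most
`n / 2`. Cutting at `i` gives the decomposition: the first `i` terms are strong by minimality,
and the middle block shifted down by `i` has prefix sums `S (i + r) - C(i + r, 2) + C(r, 2)`,
so it is a score sequence, self-complementary because `l` is. Conversely, in any decomposition
at `i` the strong prefix forces `i` to be that least index, which gives uniqueness.
-/

/-- A score sequence of length `n`: nondecreasing, partial sums `≥ C(r,2)` for `1 ≤ r < n`,
and total sum `C(n,2)`. -/
def IsScoreSeq (l : List ℕ) : Prop :=
  l.Pairwise (· ≤ ·) ∧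
  (∀ r, 1 ≤ r → r < l.length → r.choose 2 ≤ (l.take r).sum) ∧
  l.sum = l.length.choose 2

/-- A sequence of length `n` is self-complementary if `s_{n+1-i} = n-1-s_i`
for all `1 ≤ i ≤ ⌊n/2⌋` (here `l.getD (i-1) 0` is the `i`-th term `s_i`). -/
def IsSelfCompl (l : List ℕ) : Prop :=
  ∀ i, 1 ≤ i → i ≤ l.length / 2 →
    ((l.getD (l.length - i) 0 : ℤ)) = (l.length : ℤ) - 1 - (l.getD (i - 1) 0 : ℤ)

/-- A strong score sequence of length `n`: nondecreasing, partial sums `> C(r,2)` for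
`1 ≤ r < n`, and total sum `C(n,2)`. -/
def IsStrongScoreSeq (l : List ℕ) : Prop :=
  l.Pairwise (· ≤ ·) ∧
  (∀ r, 1 ≤ r → r < l.length → r.choose 2 < (l.take r).sum) ∧
  l.sum = l.length.choose 2

/-- A score sequence, for sequences of integers: all terms nonnegative, nondecreasing,
partial sums `≥ C(r,2)` for `1 ≤ r < n`, and total sum `C(n,2)`. -/
def IsScoreSeqZ (l : List ℤ) : Prop :=
  (∀ x ∈ l, 0 ≤ x) ∧ l.Pairwise (· ≤ ·) ∧
  (∀ r, 1 ≤ r → r < l.length → (r.choose 2 : ℤ) ≤ (l.take r).sum) ∧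
  l.sum = (l.length.choose 2 : ℤ)

/-- A sequence of integers of length `n` is self-complementary if
`s_{n+1-i} = n - 1 - s_i` for all `1 ≤ i ≤ ⌊n/2⌋`. -/
def IsSelfComplZ (l : List ℤ) : Prop :=
  ∀ i, 1 ≤ i → i ≤ l.length / 2 →
    l.getD (l.length - i) 0 = (l.length : ℤ) - 1 - l.getD (i - 1) 0

/-- `SelfComplDecomp l i` says: `1 ≤ i ≤ ⌊n/2⌋`, the first `i` terms of `l` form a strong
score sequence of length `i`, the middle `n - 2i` terms, each decreased by `i`, form a
self-complementary score sequence of length `n - 2i` (for `n - 2i = 0` this is the empty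
score sequence, which counts as self-complementary), and the last `i` terms are the
complements of the first `i` terms: `s_{n+1-j} = n - 1 - s_j` for `1 ≤ j ≤ i`. -/
def SelfComplDecomp (l : List ℕ) (i : ℕ) : Prop :=
  1 ≤ i ∧ i ≤ l.length / 2 ∧ IsStrongScoreSeq (l.take i) ∧
  IsScoreSeqZ (((l.drop i).take (l.length - 2 * i)).map (fun x => (x : ℤ) - (i : ℤ))) ∧
  IsSelfComplZ (((l.drop i).take (l.length - 2 * i)).map (fun x => (x : ℤ) - (i : ℤ))) ∧
  ∀ j, 1 ≤ j → j ≤ i →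
    ((l.getD (l.length - j) 0 : ℤ)) = (l.length : ℤ) - 1 - (l.getD (j - 1) 0 : ℤ)

theorem Nat.choose_two_add (a b : ℕ) : (a + b).choose 2 = a.choose 2 + b.choose 2 + a * b := by
  apply Nat.cast_injective (R := ℚ)
  push_cast [Nat.cast_choose_two]
  ring

theorem List.sum_map_natCast_sub (L : List ℕ) (c : ℤ) :
    (L.map fun x : ℕ => (x : ℤ) - c).sum = L.sum - L.length * c := by
  induction L with
  | nil => simp
  | cons a L ih => simp only [List.map_cons, List.sum_cons, List.length_cons, ih]; push_cast; ring

namespace IsSelfCompl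

variable {l : List ℕ}

theorem getD_add_getD (hsc : IsSelfCompl l) {i : ℕ} (hi : 1 ≤ i) (hin : i ≤ l.length / 2) :
    l.getD (l.length - i) 0 + l.getD (i - 1) 0 = l.length - 1 := by
  have := hsc i hi hin
  omega

theorem sum_drop_add_sum_take (hsc : IsSelfCompl l) {r : ℕ} (hr : r ≤ l.length / 2) :
    (l.drop (l.length - r)).sum + (l.take r).sum = r * (l.length - 1) := by
  induction r with
  | zero => simp
  | succ r ih =>
    have hlt : l.length - (r + 1) < l.length := by omega
    have hpair := hsc.getD_add_getD (Nat.le_add_left 1 r) hr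
    rw [List.getD_eq_getElem _ _ hlt, Nat.add_sub_cancel,
      List.getD_eq_getElem _ _ (by omega)] at hpair
    rw [List.drop_eq_getElem_cons hlt, List.sum_cons, List.sum_take_succ _ _ (by omega),
      show l.length - (r + 1) + 1 = l.length - r by omega, Nat.succ_mul, ← ih (by omega)]
    omega

/-- The excess `S(r) - C(r,2)` of the prefix sums `S` is invariant under `r ↦ n - r`. -/
theorem sum_take_length_sub (hsc : IsSelfCompl l) (hsum : l.sum = l.length.choose 2) {r : ℕ}
    (hr : r ≤ l.length / 2) :
    (l.take (l.length - r)).sum + r.choose 2 = (l.take r).sum + (l.length - r).choose 2 := by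
  rcases Nat.eq_zero_or_pos r with rfl | hr0
  · simpa using hsum
  have hsplit : (l.take (l.length - r)).sum + (l.drop (l.length - r)).sum = l.sum := by
    rw [← List.sum_append, List.take_append_drop]
  have hcompl := hsc.sum_drop_add_sum_take hr
  rw [hsum] at hsplit
  generalize (l.take (l.length - r)).sum = A at hsplit ⊢
  generalize (l.drop (l.length - r)).sum = B at hsplit hcompl
  generalize (l.take r).sum = S at hcompl ⊢
  apply Nat.cast_injective (R := ℚ)
  qify [show 1 ≤ l.length by omega] at hsplit hcompl
  push_cast [Nat.cast_choose_two, Nat.cast_sub (show r ≤ l.length by omega)] at hsplit hcompl ⊢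
  linear_combination hsplit - hcompl

end IsSelfCompl

def tightPrefixLengths (l : List ℕ) : Set ℕ :=
  {r | 1 ≤ r ∧ r < l.length ∧ (l.take r).sum = r.choose 2}

theorem IsScoreSeq.not_isStrongScoreSeq_iff {l : List ℕ} (hseq : IsScoreSeq l) :
    ¬ IsStrongScoreSeq l ↔ (tightPrefixLengths l).Nonempty := by
  obtain ⟨hsort, hpart, hsum⟩ := hseq
  constructor
  · intro hns
    by_contra hempty
    exact hns ⟨hsort, fun r h1 h2 =>
      (hpart r h1 h2).lt_of_ne fun heq => hempty ⟨r, h1, h2, heq.symm⟩, hsum⟩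
  · rintro ⟨r, h1, h2, heq⟩ hstrong
    exact (hstrong.2.1 r h1 h2).ne heq.symm

theorem IsSelfCompl.le_half_of_isLeast {l : List ℕ} (hsc : IsSelfCompl l)
    (hsum : l.sum = l.length.choose 2) {i : ℕ} (hi : IsLeast (tightPrefixLengths l) i) :
    i ≤ l.length / 2 := by
  obtain ⟨⟨hi1, hin, heq⟩, hmin⟩ := hi
  by_contra! hgt
  have hsym := hsc.sum_take_length_sub hsum (r := l.length - i) (by omega)
  rw [Nat.sub_sub_self hin.le, heq] at hsym
  have := hmin (a := l.length - i) ⟨by omega, by omega, by omega⟩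
  omega

theorem SelfComplDecomp.isLeast {l : List ℕ} {i : ℕ} (h : SelfComplDecomp l i) :
    IsLeast (tightPrefixLengths l) i := by
  obtain ⟨hi1, hin, ⟨-, hstrict, hsum⟩, -⟩ := h
  rw [List.length_take_of_le (by omega)] at hstrict hsum
  refine ⟨⟨hi1, by omega, hsum⟩, fun r ⟨hr1, _, hr⟩ => not_lt.mp fun hri => ?_⟩
  have := hstrict r hr1 hri
  rw [List.take_take, min_eq_left hri.le, hr] at this
  exact lt_irrefl _ this

theorem IsScoreSeq.isStrongScoreSeq_take {l : List ℕ} (hseq : IsScoreSeq l) {i : ℕ}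
    (hi : IsLeast (tightPrefixLengths l) i) : IsStrongScoreSeq (l.take i) := by
  obtain ⟨hsort, hpart, -⟩ := hseq
  obtain ⟨⟨-, hin, heq⟩, hmin⟩ := hi
  have hlen : (l.take i).length = i := List.length_take_of_le hin.le
  refine ⟨hsort.sublist (List.take_sublist i l), fun r hr1 hri => ?_, by rw [hlen, heq]⟩
  rw [hlen] at hri
  rw [List.take_take, min_eq_left hri.le]
  exact (hpart r hr1 (by omega)).lt_of_ne fun hr =>
    not_le.mpr hri (hmin ⟨hr1, by omega, hr.symm⟩)

def shiftedMiddle (l : List ℕ) (i : ℕ) : List ℤ :=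
  ((l.drop i).take (l.length - 2 * i)).map (fun x : ℕ => (x : ℤ) - i)

/-- In `SelfComplDecomp` the middle block is first coerced to `List ℤ` (through `bind`/`pure`)
and only then shifted. -/
theorem map_sub_coe_eq_shiftedMiddle (l : List ℕ) (i : ℕ) :
    (((l.drop i).take (l.length - 2 * i)).map (fun x => (x : ℤ) - (i : ℤ)) : List ℤ) =
      shiftedMiddle l i := by
  simp only [shiftedMiddle, List.bind_eq_flatMap, List.pure_def, ← List.map_eq_flatMap,
    List.map_map]
  rfl

section shiftedMiddle

variable {l : List ℕ} {i : ℕ}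

theorem length_shiftedMiddle : (shiftedMiddle l i).length = l.length - 2 * i := by
  simp only [shiftedMiddle, List.length_map, List.length_take, List.length_drop]
  omega

theorem getD_shiftedMiddle {k : ℕ} (hk : k < l.length - 2 * i) :
    (shiftedMiddle l i).getD k 0 = l.getD (i + k) 0 - i := by
  rw [List.getD_eq_getElem _ _ (length_shiftedMiddle ▸ hk),
    List.getD_eq_getElem _ _ (by omega)]
  simp [shiftedMiddle]

theorem pairwise_shiftedMiddle (hsort : l.Pairwise (· ≤ ·)) :
    (shiftedMiddle l i).Pairwise (· ≤ ·) :=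
  ((hsort.sublist (List.drop_sublist i l)).sublist (List.take_sublist _ _)).map _
    fun _ _ hab => by simpa using hab

theorem sum_take_shiftedMiddle (hi : (l.take i).sum = i.choose 2) {r : ℕ}
    (hr : r ≤ l.length - 2 * i) :
    ((shiftedMiddle l i).take r).sum = (l.take (i + r)).sum - (i + r).choose 2 + r.choose 2 := by
  have hlen : ((l.drop i).take r).length = r := by
    rw [List.length_take_of_le (by rw [List.length_drop]; omega)]
  rw [shiftedMiddle, ← List.map_take, List.take_take, min_eq_left hr, List.sum_map_natCast_sub,
    hlen, List.take_add, List.sum_append, hi, Nat.choose_two_add]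
  push_cast
  ring

theorem IsScoreSeq.isScoreSeqZ_shiftedMiddle (hseq : IsScoreSeq l) (hsc : IsSelfCompl l)
    (hi1 : 1 ≤ i) (hhalf : i ≤ l.length / 2) (heq : (l.take i).sum = i.choose 2) :
    IsScoreSeqZ (shiftedMiddle l i) := by
  obtain ⟨hsort, hpart, hsum⟩ := hseq
  have hprefix : ∀ r ≤ l.length - 2 * i,
      (r.choose 2 : ℤ) ≤ ((shiftedMiddle l i).take r).sum := by
    intro r hr
    rw [sum_take_shiftedMiddle heq hr]
    have := hpart (i + r) (by omega) (by omega)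
    omega
  have htotal : (shiftedMiddle l i).sum = ((l.length - 2 * i).choose 2 : ℤ) := by
    have hsym := hsc.sum_take_length_sub hsum hhalf
    rw [← List.take_length (l := shiftedMiddle l i), length_shiftedMiddle,
      sum_take_shiftedMiddle heq le_rfl, show i + (l.length - 2 * i) = l.length - i by omega]
    omega
  have hsorted : (shiftedMiddle l i).Pairwise (· ≤ ·) := pairwise_shiftedMiddle hsort
  refine ⟨fun x hx => ?_, hsorted, fun r hr1 hr => hprefix r (length_shiftedMiddle ▸ hr.le),
    length_shiftedMiddle ▸ htotal⟩
  -- every term is at least the first one, which is a prefix sum of length one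
  obtain ⟨a, t, hat⟩ := List.exists_cons_of_ne_nil (List.ne_nil_of_mem hx)
  have hlen : 1 ≤ l.length - 2 * i := by
    have := congrArg List.length hat
    rw [length_shiftedMiddle, List.length_cons] at this
    omega
  have ha : 0 ≤ a := by simpa [hat] using hprefix 1 hlen
  rw [hat] at hx hsorted
  rcases List.mem_cons.mp hx with rfl | hxt
  · exact ha
  · exact ha.trans (List.rel_of_pairwise_cons hsorted hxt)

theorem IsSelfCompl.isSelfComplZ_shiftedMiddle (hsc : IsSelfCompl l) :
    IsSelfComplZ (shiftedMiddle l i) := by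
  intro j hj1 hj
  rw [length_shiftedMiddle] at hj ⊢
  rw [getD_shiftedMiddle (by omega), getD_shiftedMiddle (by omega),
    show i + (l.length - 2 * i - j) = l.length - (i + j) by omega,
    show i + (j - 1) = i + j - 1 by omega]
  have := hsc (i + j) (by omega) (by omega)
  omega

end shiftedMiddle

theorem selfComplDecomp_of_isLeast {l : List ℕ} (hseq : IsScoreSeq l) (hsc : IsSelfCompl l)
    {i : ℕ} (hi : IsLeast (tightPrefixLengths l) i) : SelfComplDecomp l i := by
  have hhalf := hsc.le_half_of_isLeast hseq.2.2 hi
  refine ⟨hi.1.1, hhalf, hseq.isStrongScoreSeq_take hi, ?_, ?_,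
    fun j hj1 hji => hsc j hj1 (by omega)⟩
  · rw [map_sub_coe_eq_shiftedMiddle]
    exact hseq.isScoreSeqZ_shiftedMiddle hsc hi.1.1 hhalf hi.1.2.2
  · rw [map_sub_coe_eq_shiftedMiddle]
    exact hsc.isSelfComplZ_shiftedMiddle

theorem selfcompl_not_strong_decomposition_general (l : List ℕ)
    (hseq : IsScoreSeq l) (hsc : IsSelfCompl l) :
    (¬ IsStrongScoreSeq l ↔ ∃ i, SelfComplDecomp l i) ∧
    (∀ i j, SelfComplDecomp l i → SelfComplDecomp l j → i = j) := by
  refine ⟨hseq.not_isStrongScoreSeq_iff.trans ⟨fun hne => ?_, fun ⟨i, hi⟩ => ⟨i, hi.isLeast.1⟩⟩,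
    fun i j hi hj => hi.isLeast.unique hj.isLeast⟩
  exact ⟨_, selfComplDecomp_of_isLeast hseq hsc (isLeast_csInf hne)⟩

/-- A self-complementary score sequence of length `n` fails to be strong iff it decomposes
as a strong score sequence of length `i`, a self-complementary score sequence of length
`n - 2i` shifted up by `i`, and the complement of the initial part, for some
`1 ≤ i ≤ ⌊n/2⌋`; moreover such an index `i` is unique. -/
theorem selfcompl_not_strong_decomposition (n : ℕ) (l : List ℕ) (hlen : l.length = n)
    (hseq : IsScoreSeq l) (hsc : IsSelfCompl l) :
    (¬ IsStrongScoreSeq l ↔ ∃ i, SelfComplDecomp l i) ∧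
    (∀ i j, SelfComplDecomp l i → SelfComplDecomp l j → i = j) :=
  selfcompl_not_strong_decomposition_general l hseq hsc
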